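/- For all real a with |a| ≥ 1 and all real b: |log(sinh²(a) + sin²(b)) − 2|a| + 2·log 2| ≤ 5·exp(−2|a|). -/

import Mathlib

/-!
Writing `t = exp (-2x)` for `x = |a|`, one has
`sinh² x + s = (e^{2x} / 4) ((1 - t)² + 4 t s)`, and for `s = sin² b ∈ [0, 1]` the second factor
lies between `(1 - t)²` and `(1 + t)²`, so its logarithm is at most `2t / (1 - t)` in absolute
value. Since `x ≥ 1` gives `t ≤ e⁻² ≤ 1/3`, this is at most `3t`.
-/

open Real

namespace Real

lemma sinh_sq_add_eq_exp_mul (x s : ℝ) :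
    sinh x ^ 2 + s
      = exp (2 * x) / 4 * ((1 - exp (-2 * x)) ^ 2 + 4 * exp (-2 * x) * s) := by
  have hexp : exp (2 * x) = exp x ^ 2 := by rw [← exp_nat_mul]; ring_nf
  have hexp_neg : exp (-2 * x) = (exp x ^ 2)⁻¹ := by rw [neg_mul, exp_neg, hexp]
  rw [sinh_eq, exp_neg, hexp, hexp_neg]
  field_simp
  ring

lemma log_sinh_sq_add_eq {x s : ℝ} (hx : 0 < x) (hs : 0 ≤ s) :
    log (sinh x ^ 2 + s)
      = 2 * x - 2 * log 2 + log ((1 - exp (-2 * x)) ^ 2 + 4 * exp (-2 * x) * s) := by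
  have ht : exp (-2 * x) < 1 := exp_lt_one_iff.2 (by linarith)
  have hpos : 0 < (1 - exp (-2 * x)) ^ 2 + 4 * exp (-2 * x) * s := by
    have := sub_pos.2 ht
    positivity
  have hlog4 : log 4 = 2 * log 2 := by
    rw [show (4 : ℝ) = 2 ^ 2 by norm_num, log_pow, Nat.cast_ofNat]
  rw [sinh_sq_add_eq_exp_mul, log_mul (by positivity) hpos.ne', log_div (exp_pos _).ne'
    (by norm_num), log_exp, hlog4]

lemma abs_log_le_of_mem_Icc {t y : ℝ} (ht₀ : 0 ≤ t) (ht₁ : t < 1)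
    (hy : y ∈ Set.Icc ((1 - t) ^ 2) ((1 + t) ^ 2)) :
    |log y| ≤ 2 * t / (1 - t) := by
  have h1t : 0 < 1 - t := sub_pos.2 ht₁
  have hy₀ : 0 < y := lt_of_lt_of_le (by positivity) hy.1
  have hupper : log y ≤ 2 * t :=
    calc log y ≤ log ((1 + t) ^ 2) := log_le_log hy₀ hy.2
      _ = 2 * log (1 + t) := by rw [log_pow, Nat.cast_ofNat]
      _ ≤ 2 * t := by linarith [log_le_sub_one_of_pos (by linarith : 0 < 1 + t)]
  have hlower : -(2 * t / (1 - t)) ≤ log y :=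
    calc -(2 * t / (1 - t)) = 2 * (1 - (1 - t)⁻¹) := by field_simp; ring
      _ ≤ 2 * log (1 - t) := by linarith [one_sub_inv_le_log_of_pos h1t]
      _ = log ((1 - t) ^ 2) := by rw [log_pow, Nat.cast_ofNat]
      _ ≤ log y := log_le_log (by positivity) hy.1
  have : 2 * t ≤ 2 * t / (1 - t) := le_div_self (by positivity) h1t (by linarith)
  exact abs_le.2 ⟨hlower, hupper.trans this⟩

lemma sq_one_sub_add_mem_Icc {t s : ℝ} (ht : 0 ≤ t) (hs₀ : 0 ≤ s) (hs₁ : s ≤ 1) :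
    (1 - t) ^ 2 + 4 * t * s ∈ Set.Icc ((1 - t) ^ 2) ((1 + t) ^ 2) :=
  ⟨by nlinarith, by nlinarith⟩

end Real

theorem log_sinh_sq_sin_sq_uniform (a b : ℝ) (ha : 1 ≤ |a|) :
    |Real.log (Real.sinh a ^ 2 + Real.sin b ^ 2) - 2 * |a| + 2 * Real.log 2|
      ≤ 5 * Real.exp (-2 * |a|) := by
  set t := exp (-2 * |a|) with ht
  have hsinh : sinh a ^ 2 = sinh |a| ^ 2 := by rw [sinh_sq, sinh_sq, cosh_abs]
  have ht₀ : 0 ≤ t := (exp_pos _).le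
  have ht₁ : t ≤ 1 / 3 :=
    calc t ≤ exp (-2) := exp_le_exp.2 (by linarith)
      _ = (exp 2)⁻¹ := exp_neg 2
      _ ≤ 1 / 3 := by rw [one_div]; gcongr; linarith [add_one_le_exp 2]
  rw [hsinh, log_sinh_sq_add_eq (by linarith) (sq_nonneg _), ← ht]
  calc |2 * |a| - 2 * log 2 + log ((1 - t) ^ 2 + 4 * t * sin b ^ 2) - 2 * |a| + 2 * log 2|
      = |log ((1 - t) ^ 2 + 4 * t * sin b ^ 2)| := by ring_nf
    _ ≤ 2 * t / (1 - t) := abs_log_le_of_mem_Icc ht₀ (by linarith)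
        (sq_one_sub_add_mem_Icc ht₀ (sq_nonneg _) (sin_sq_le_one b))
    _ ≤ 5 * t := by rw [div_le_iff₀ (by linarith)]; nlinarith
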